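/- The sign of T_{n+1} − ψ·T_n is not eventually periodic in n. -/

import Mathlib

def trib : ℕ → ℕ
  | 0 => 0
  | 1 => 1
  | 2 => 1
  | n + 3 => trib (n + 2) + trib (n + 1) + trib n

lemma trib_pos : ∀ n : ℕ, 0 < trib (n+1) := by
  intro n
  induction n using Nat.strong_induction_on with
  | _ n ih =>
    match n with
    | 0 => norm_num [trib]
    | 1 => norm_num [trib]
    | (m+2) =>
      have h : 0 < trib (m+2) := ih (m+1) (by omega)
      have h2 : trib (m+2+1) = trib (m+2) + trib (m+1) + trib m := rfl
      omega

lemma sweep (g u v : ℝ) (hg : 0 < g) (hu : 0 ≤ u) (hlt : g < v - u) (M : ℕ) :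
    ∃ (j : ℕ) (K : ℕ), M ≤ j ∧ (K:ℝ) + u < j*g ∧ (j:ℝ)*g < K + v := by
  obtain ⟨K, hK⟩ := exists_nat_gt ((M:ℝ)*g)
  set x : ℝ := ((K:ℝ) + u)/g with hx
  have hx0 : 0 ≤ x := by positivity
  have h3 : ((⌊x⌋.toNat : ℝ)) = (⌊x⌋:ℝ) := by
    norm_cast
    exact Int.toNat_of_nonneg (Int.floor_nonneg.mpr hx0)
  have hlow : (K:ℝ) + u < (⌊x⌋.toNat + 1 : ℕ) * g := by
    have h2 : x < (⌊x⌋:ℝ) + 1 := Int.lt_floor_add_one x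
    push_cast
    rw [h3]
    calc (K:ℝ) + u = x * g := by rw [hx, div_mul_cancel₀ _ hg.ne']
      _ < ((⌊x⌋:ℝ)+1) * g := mul_lt_mul_of_pos_right h2 hg
  refine ⟨⌊x⌋.toNat + 1, K, ?_, hlow, ?_⟩
  · have : (M:ℝ)*g < ((⌊x⌋.toNat + 1 : ℕ):ℝ)*g := by
      push_cast at hlow ⊢
      nlinarith [hK, hu]
    have h5 : (M:ℝ) < ((⌊x⌋.toNat + 1 : ℕ):ℝ) := lt_of_mul_lt_mul_right this hg.le
    exact_mod_cast h5.le
  · have h2 : (⌊x⌋:ℝ) ≤ x := Int.floor_le x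
    push_cast
    rw [h3]
    have : ((⌊x⌋:ℝ)+1)*g ≤ (x+1)*g := by nlinarith
    have h4 : (x+1)*g = (K:ℝ) + u + g := by rw [hx, add_mul, div_mul_cancel₀ _ hg.ne', one_mul]
    nlinarith

lemma exists_small (β ε : ℝ) (hε : 0 < ε) (hε1 : ε ≤ 1)
    (hirr : ∀ n : ℕ, 1 ≤ n → ∀ k : ℤ, (n:ℝ)*β ≠ (k:ℝ)) :
    ∃ (n₀ : ℕ) (g : ℝ) (k : ℤ), 1 ≤ n₀ ∧ 0 < g ∧ g < ε ∧
      ((n₀:ℝ)*β = k + g ∨ (n₀:ℝ)*β = k - g) := by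
  rcases AddSubgroup.dense_or_cyclic (AddSubgroup.closure ({1, β} : Set ℝ)) with hd | ⟨c, hc⟩
  · obtain ⟨x, hxS, hx⟩ : ∃ x ∈ AddSubgroup.closure ({1, β} : Set ℝ), x ∈ Set.Ioo 0 ε :=
      hd.exists_mem_open isOpen_Ioo (Set.nonempty_Ioo.mpr hε)
    obtain ⟨m, n, hmn⟩ := AddSubgroup.mem_closure_pair.mp hxS
    have hxval : (m:ℝ) + n*β = x := by
      push_cast [zsmul_eq_mul] at hmn
      linarith [hmn]
    obtain ⟨hx0, hxε⟩ := hx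
    rcases lt_trichotomy n 0 with hn | hn | hn
    · refine ⟨(-n).toNat, x, m, by omega, hx0, hxε, Or.inr ?_⟩
      have : (((-n).toNat : ℤ):ℝ) = ((-n : ℤ):ℝ) := by norm_cast; omega
      push_cast at this ⊢
      rw [this]
      linarith
    · exfalso
      subst hn
      push_cast at hxval
      have hxm : x = (m:ℝ) := by linarith
      rw [hxm] at hx0 hxε
      have h1 : (0:ℤ) < m := by exact_mod_cast hx0
      have h2 : (m:ℝ) ≥ 1 := by exact_mod_cast h1
      linarith
    · refine ⟨n.toNat, x, -m, by omega, hx0, hxε, Or.inl ?_⟩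
      have : ((n.toNat : ℤ):ℝ) = ((n : ℤ):ℝ) := by norm_cast; omega
      push_cast at this ⊢
      rw [this]
      linarith
  · exfalso
    have h1 : (1:ℝ) ∈ AddSubgroup.closure ({1, β} : Set ℝ) :=
      AddSubgroup.subset_closure (by simp)
    have h2 : β ∈ AddSubgroup.closure ({1, β} : Set ℝ) :=
      AddSubgroup.subset_closure (by simp)
    rw [hc, AddSubgroup.mem_closure_singleton] at h1 h2
    obtain ⟨m, hm⟩ := h1
    obtain ⟨n, hn⟩ := h2
    have hm0 : m ≠ 0 := by rintro rfl; simp at hm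
    have hcval : (m:ℝ) * c = 1 := by push_cast [zsmul_eq_mul] at hm; linarith
    have hβval : (n:ℝ) * c = β := by push_cast [zsmul_eq_mul] at hn; linarith
    have key : (m:ℝ) * β = n := by
      have h : (m:ℝ) * ((n:ℝ)*c) = (n:ℝ) * ((m:ℝ)*c) := by ring
      rw [hcval, hβval] at h
      linarith
    rcases lt_or_gt_of_ne hm0 with h | h
    · exact hirr (-m).toNat (by omega) (-n) (by
        have : (((-m).toNat : ℤ):ℝ) = ((-m:ℤ):ℝ) := by norm_cast; omega
        push_cast at this ⊢
        rw [this]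
        linarith)
    · exact hirr m.toNat (by omega) n (by
        have : ((m.toNat : ℤ):ℝ) = ((m:ℤ):ℝ) := by norm_cast; omega
        push_cast at this ⊢
        rw [this]
        linarith)

lemma orbit_dense (β u v : ℝ)
    (hirr : ∀ n : ℕ, 1 ≤ n → ∀ k : ℤ, (n:ℝ)*β ≠ (k:ℝ))
    (hu : 0 ≤ u) (hv : v ≤ 1) (huv : u < v) (M : ℕ) :
    ∃ (n : ℕ) (K : ℤ), M ≤ n ∧ (K:ℝ) + u < n*β ∧ (n:ℝ)*β < K + v := by
  set ε : ℝ := min (v - u) 1 with hε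
  have hε0 : 0 < ε := lt_min (by linarith) one_pos
  obtain ⟨n₀, g, k, hn₀, hg0, hgε, hrep⟩ := exists_small β ε hε0 (min_le_right _ _) hirr
  have hgvu : g < v - u := lt_of_lt_of_le hgε (min_le_left _ _)
  rcases hrep with hrep | hrep
  · obtain ⟨j, K, hMj, h1, h2⟩ := sweep g u v hg0 hu hgvu M
    refine ⟨j * n₀, (j:ℤ) * k + K, ?_, ?_, ?_⟩
    · calc M ≤ j := hMj
        _ ≤ j * n₀ := Nat.le_mul_of_pos_right j (by omega)
    · have h : ((j*n₀ : ℕ):ℝ) * β = (j:ℝ) * ((n₀:ℝ)*β) := by push_cast; ring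
      rw [h, hrep]; push_cast; nlinarith [h1]
    · have h : ((j*n₀ : ℕ):ℝ) * β = (j:ℝ) * ((n₀:ℝ)*β) := by push_cast; ring
      rw [h, hrep]; push_cast; nlinarith [h2]
  · obtain ⟨j, K, hMj, h1, h2⟩ := sweep g (1-v) (1-u) hg0 (by linarith) (by linarith) M
    refine ⟨j * n₀, (j:ℤ) * k - K - 1, ?_, ?_, ?_⟩
    · calc M ≤ j := hMj
        _ ≤ j * n₀ := Nat.le_mul_of_pos_right j (by omega)
    · have h : ((j*n₀ : ℕ):ℝ) * β = (j:ℝ) * ((n₀:ℝ)*β) := by push_cast; ring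
      rw [h, hrep]; push_cast; nlinarith [h2]
    · have h : ((j*n₀ : ℕ):ℝ) * β = (j:ℝ) * ((n₀:ℝ)*β) := by push_cast; ring
      rw [h, hrep]; push_cast; nlinarith [h1]

lemma im_pow (α : ℂ) (n : ℕ) :
    (α^n).im = (‖α‖)^n * Real.sin (n * Complex.arg α) := by
  set r := ‖α‖
  set θ := Complex.arg α
  have h : (r:ℂ) * Complex.exp ((θ:ℂ) * Complex.I) = α := Complex.norm_mul_exp_arg_mul_I α
  have h2 : α^n = ((r^n : ℝ) : ℂ) * Complex.exp ((((n:ℝ)*θ : ℝ) : ℂ) * Complex.I) := by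
    rw [← h, mul_pow, ← Complex.exp_nat_mul]
    push_cast
    ring_nf
  rw [h2, Complex.mul_im, Complex.ofReal_re, Complex.ofReal_im, Complex.exp_ofReal_mul_I_im]
  simp

lemma sin_neg_of (x : ℝ) (h1 : -Real.pi < x) (h2 : x < 0) : Real.sin x < 0 := by
  have := Real.sin_pos_of_pos_of_lt_pi (x := -x) (by linarith) (by linarith)
  rw [Real.sin_neg] at this
  linarith

set_option maxHeartbeats 4000000 in
theorem sign_not_eventually_periodic (ψ : ℝ)
    (hψ : ψ^3 - ψ^2 - ψ - 1 = 0) :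
    ¬ ∃ N p : ℕ, 1 ≤ p ∧ ∀ n : ℕ, N ≤ n →
      Real.sign ((trib (n + p + 1) : ℝ) - ψ * (trib (n + p) : ℝ)) =
      Real.sign ((trib (n + 1) : ℝ) - ψ * (trib n : ℝ)) := by
  rintro ⟨N, p, hp, hper⟩
  have h18 : 1.8 < ψ := by
    nlinarith [sq_nonneg (ψ - 1.8), sq_nonneg (ψ + 1), sq_nonneg ψ, sq_nonneg (ψ-4), sq_nonneg (ψ+2)]
  have h185 : ψ < 1.85 := by
    nlinarith [sq_nonneg (ψ - 1.85), sq_nonneg (ψ + 1), sq_nonneg ψ, sq_nonneg (ψ+2)]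
  have hψ0 : ψ ≠ 0 := by linarith
  -- ψ is irrational
  have hirrψ : Irrational ψ := by
    rintro ⟨q, hq'⟩
    have hq : q^3 - q^2 - q - 1 = 0 := by
      have := hψ; rw [← hq'] at this; exact_mod_cast this
    have hint : IsIntegral ℤ q := by
      refine ⟨Polynomial.X^3 - Polynomial.X^2 - Polynomial.X - Polynomial.C 1, ?_, ?_⟩
      · monicity!
      · simp [hq]
    obtain ⟨z, hz⟩ := IsIntegrallyClosed.isIntegral_iff.mp hint
    have hz' : ((z:ℚ):ℝ) = ψ := by rw [show ((z:ℚ)) = q from hz, hq']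
    have h1 : (1.8:ℝ) < (z:ℝ) := by push_cast at hz' ⊢; rw [hz']; exact h18
    have h2 : ((z:ℝ)) < 1.85 := by push_cast at hz' ⊢; rw [hz']; exact h185
    have hz2 : z ≤ 1 ∨ 2 ≤ z := by omega
    rcases hz2 with h | h
    · have : (z:ℝ) ≤ 1 := by exact_mod_cast h
      linarith
    · have : (2:ℝ) ≤ (z:ℝ) := by exact_mod_cast h
      linarith
  -- complex root setup
  set a : ℝ := (1 - ψ)/2 with ha
  have hb2pos : 0 < 1/ψ - a^2 := by
    rw [ha]
    have h4 : 0 < 4 - ψ*(1-ψ)^2 := by nlinarith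
    have h5 : 1/ψ - ((1-ψ)/2)^2 = (4 - ψ*(1-ψ)^2)/(4*ψ) := by field_simp; ring
    rw [h5]
    positivity
  set b : ℝ := Real.sqrt (1/ψ - a^2) with hbdef
  have hb : 0 < b := Real.sqrt_pos.mpr hb2pos
  have hb2 : b^2 = 1/ψ - a^2 := Real.sq_sqrt hb2pos.le
  set α : ℂ := (a:ℂ) + (b:ℂ)*Complex.I with hα
  have hψC : (ψ:ℂ)^3 - (ψ:ℂ)^2 - (ψ:ℂ) - 1 = 0 := by exact_mod_cast congrArg Complex.ofReal hψ
  have hQ : α^2 - (1-(ψ:ℂ))*α + ((ψ:ℂ)^2 - ψ - 1) = 0 := by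
    rw [hα, Complex.ext_iff]
    constructor
    · simp [Complex.add_re, Complex.mul_re, pow_two]
      have hbb : b*b = 1/ψ - a^2 := by nlinarith [hb2]
      rw [hbb]
      have h6 : (ψ:ℝ)^2 - ψ - 1 = 1/ψ := by field_simp; linarith
      rw [ha]
      field_simp
      linarith
    · simp [Complex.add_im, Complex.mul_im, pow_two]
      rw [ha]; ring
  have hcube : α^3 = α^2 + α + 1 := by
    linear_combination (α - (ψ:ℂ)) * hQ + hψC
  have hpow : ∀ n : ℕ, α^(n+3) = (trib (n+2) : ℂ)*α^2 + ((trib (n+1) : ℂ) + (trib n : ℂ))*α + (trib (n+1) : ℂ) := by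
    intro n
    induction n with
    | zero => simpa [trib] using hcube
    | succ m ih =>
      have hc : (trib (m+3) : ℂ) = (trib (m+2) : ℂ) + (trib (m+1) : ℂ) + (trib m : ℂ) := by
        have h : trib (m+3) = trib (m+2) + trib (m+1) + trib m := rfl
        rw [h]; push_cast; ring
      have hstep : α^(m+1+3) = α^(m+3) * α := by ring
      rw [hstep, ih, show m+1+2 = m+3 from rfl, hc]
      linear_combination (trib (m+2) : ℂ) * hcube
  have him1 : α.im = b := by simp [hα]
  have him2 : (α^2).im = 2*a*b := by
    rw [hα]; simp [pow_two, Complex.add_im, Complex.mul_im]; ring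
  have hx : ∀ n : ℕ, (α^(n+1)).im = b * ((trib (n+1) : ℝ) - ψ * (trib n : ℝ)) := by
    intro n
    match n with
    | 0 => simp [him1, trib]
    | 1 => rw [him2]; norm_num [trib]; rw [ha]; ring
    | (m+2) =>
      have h := congrArg Complex.im (hpow m)
      simp only [Complex.add_im, Complex.mul_im, Complex.natCast_im, Complex.natCast_re,
        Complex.ofReal_im, Complex.add_re, zero_mul, add_zero, mul_zero] at h
      rw [show m+2+1 = m+3 from rfl, h, him2, him1]
      have hc : ((trib (m+3) : ℝ)) = (trib (m+2) : ℝ) + (trib (m+1) : ℝ) + (trib m : ℝ) := by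
        have h' : trib (m+3) = trib (m+2) + trib (m+1) + trib m := rfl
        rw [h']; push_cast; ring
      rw [hc, ha]; ring
  have hxne : ∀ n : ℕ, (trib (n+1) : ℝ) - ψ * (trib n : ℝ) ≠ 0 := by
    intro n
    match n with
    | 0 => norm_num [trib]
    | (m+1) =>
      intro h
      have hpos : 0 < trib (m+1) := trib_pos m
      apply hirrψ
      refine ⟨(trib (m+2) : ℚ) / (trib (m+1) : ℚ), ?_⟩
      have hne : ((trib (m+1):ℚ):ℝ) ≠ 0 := by
        push_cast
        exact_mod_cast Nat.cast_pos.mpr hpos |>.ne'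
      push_cast
      rw [div_eq_iff (by exact_mod_cast hne)]
      linarith
  set r : ℝ := ‖α‖ with hrdef
  set θ : ℝ := Complex.arg α with hθdef
  have hα0 : α ≠ 0 := by
    intro h
    rw [h] at him1
    simp at him1
    linarith
  have hr : 0 < r := by
    rw [hrdef]
    exact norm_pos_iff.mpr hα0
  -- key: b * x_n = r^{n+1} sin((n+1)θ)
  have hbx : ∀ n : ℕ, b * ((trib (n+1) : ℝ) - ψ * (trib n : ℝ)) = r^(n+1) * Real.sin ((n+1) * θ) := by
    intro n
    rw [← hx n, im_pow α (n+1), ← hrdef, ← hθdef]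
    push_cast
    ring_nf
  have hsin : ∀ n : ℕ, 1 ≤ n → Real.sin (n * θ) ≠ 0 := by
    intro n hn hs
    obtain ⟨m, rfl⟩ : ∃ m, n = m + 1 := ⟨n - 1, by omega⟩
    have h := hbx m
    push_cast at hs
    rw [hs, mul_zero] at h
    have hx0 : (trib (m+1) : ℝ) - ψ * (trib m : ℝ) = 0 := by
      rcases mul_eq_zero.mp h with h' | h'
      · exact absurd h' hb.ne'
      · exact h'
    exact hxne m hx0
  clear_value a b α r θ
  have hπ := Real.pi_pos
  set β : ℝ := θ / (2 * Real.pi) with hβdef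
  have hβirr : ∀ n : ℕ, 1 ≤ n → ∀ k : ℤ, (n:ℝ)*β ≠ (k:ℝ) := by
    intro n hn k h
    apply hsin n hn
    have hθval : (n:ℝ) * θ = (k:ℝ) * (2 * Real.pi) := by
      rw [hβdef] at h
      field_simp at h
      linarith
    rw [hθval, show (k:ℝ) * (2*Real.pi) = 0 + (k:ℝ)*(2*Real.pi) by ring,
      Real.sin_add_int_mul_two_pi 0 k, Real.sin_zero]
  -- the fractional offset δ of p*θ
  set Kp : ℤ := ⌊(p:ℝ) * θ / (2 * Real.pi)⌋ with hKp
  set δ : ℝ := (p:ℝ) * θ - 2 * Real.pi * Kp with hδ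
  have hxeq : 2 * Real.pi * ((p:ℝ) * θ / (2 * Real.pi)) = (p:ℝ) * θ := by
    field_simp
  have hδ0 : 0 ≤ δ := by
    have h := Int.floor_le ((p:ℝ) * θ / (2 * Real.pi))
    have h2 := mul_le_mul_of_nonneg_left h (by linarith : (0:ℝ) ≤ 2 * Real.pi)
    rw [hxeq] at h2
    rw [hδ, hKp]
    linarith
  have hδ2π : δ < 2 * Real.pi := by
    have h := Int.lt_floor_add_one ((p:ℝ) * θ / (2 * Real.pi))
    have h2 := mul_lt_mul_of_pos_left h (by linarith : (0:ℝ) < 2 * Real.pi)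
    rw [hxeq] at h2
    rw [hδ, hKp]
    nlinarith [h2]
  have hsinδ : Real.sin δ ≠ 0 := by
    have h : Real.sin ((p:ℝ) * θ) ≠ 0 := hsin p hp
    intro h'
    apply h
    rw [show (p:ℝ) * θ = δ + (Kp:ℝ) * (2*Real.pi) by rw [hδ]; ring,
      Real.sin_add_int_mul_two_pi δ Kp]
    exact h'
  have hδne0 : 0 < δ := by
    rcases eq_or_lt_of_le hδ0 with h | h
    · exfalso; apply hsinδ; rw [← h]; exact Real.sin_zero
    · exact h
  have hδneπ : δ ≠ Real.pi := by
    intro h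
    apply hsinδ
    rw [h]
    exact Real.sin_pi
  -- find n with opposite signs of sin(nθ), sin(nθ+pθ)
  have key : ∃ n : ℕ, N + 1 ≤ n ∧
      (Real.sin ((n:ℝ)*θ) < 0 ∧ 0 < Real.sin ((n:ℝ)*θ + (p:ℝ)*θ)
       ∨ 0 < Real.sin ((n:ℝ)*θ) ∧ Real.sin ((n:ℝ)*θ + (p:ℝ)*θ) < 0) := by
    rcases lt_or_gt_of_ne hδneπ with hcase | hcase
    · -- δ ∈ (0, π): take n θ mod 2π ∈ (2π - δ, 2π)
      obtain ⟨n, K, hMn, h1, h2⟩ := orbit_dense β (1 - δ/(2*Real.pi)) 1 hβirr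
        (by
          have hq : δ/(2*Real.pi) ≤ 1 := by
            rw [div_le_one (by linarith : (0:ℝ) < 2*Real.pi)]; linarith
          linarith) le_rfl
        (by linarith [div_pos hδne0 (by linarith : (0:ℝ) < 2*Real.pi)]) (N+1)
      refine ⟨n, hMn, Or.inl ?_⟩
      have hθn1 : 2*Real.pi*K + 2*Real.pi - δ < (n:ℝ)*θ := by
        rw [hβdef] at h1
        have := mul_lt_mul_of_pos_right h1 (by linarith : (0:ℝ) < 2*Real.pi)
        field_simp at this
        nlinarith [this]
      have hθn2 : (n:ℝ)*θ < 2*Real.pi*K + 2*Real.pi := by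
        rw [hβdef] at h2
        have := mul_lt_mul_of_pos_right h2 (by linarith : (0:ℝ) < 2*Real.pi)
        field_simp at this
        nlinarith [this]
      set t : ℝ := (n:ℝ)*θ - (K+1)*(2*Real.pi) with ht
      have ht1 : -δ < t := by rw [ht]; push_cast; linarith
      have ht2 : t < 0 := by rw [ht]; push_cast; linarith
      constructor
      · rw [show (n:ℝ)*θ = t + ((K+1 : ℤ):ℝ)*(2*Real.pi) by rw [ht]; push_cast; ring,
          Real.sin_add_int_mul_two_pi]
        exact sin_neg_of t (by linarith) ht2
      · rw [show (n:ℝ)*θ + (p:ℝ)*θ = (t + δ) + ((K+1+Kp : ℤ):ℝ)*(2*Real.pi) by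
          rw [ht, hδ]; push_cast; ring, Real.sin_add_int_mul_two_pi]
        exact Real.sin_pos_of_pos_of_lt_pi (by linarith) (by linarith)
    · -- δ ∈ (π, 2π): take n θ mod 2π ∈ (0, 2π - δ)
      obtain ⟨n, K, hMn, h1, h2⟩ := orbit_dense β 0 ((2*Real.pi - δ)/(2*Real.pi)) hβirr
        le_rfl (by rw [div_le_one (by linarith)]; linarith)
        (div_pos (by linarith) (by linarith)) (N+1)
      refine ⟨n, hMn, Or.inr ?_⟩
      have hθn1 : 2*Real.pi*K < (n:ℝ)*θ := by
        rw [hβdef] at h1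
        have := mul_lt_mul_of_pos_right h1 (by linarith : (0:ℝ) < 2*Real.pi)
        field_simp at this
        nlinarith [this]
      have hθn2 : (n:ℝ)*θ < 2*Real.pi*K + (2*Real.pi - δ) := by
        rw [hβdef] at h2
        have := mul_lt_mul_of_pos_right h2 (by linarith : (0:ℝ) < 2*Real.pi)
        field_simp at this
        nlinarith [this]
      set t : ℝ := (n:ℝ)*θ - (K:ℝ)*(2*Real.pi) with ht
      have ht1 : 0 < t := by rw [ht]; linarith
      have ht2 : t < 2*Real.pi - δ := by rw [ht]; linarith
      constructor
      · rw [show (n:ℝ)*θ = t + ((K : ℤ):ℝ)*(2*Real.pi) by rw [ht]; push_cast; ring,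
          Real.sin_add_int_mul_two_pi]
        exact Real.sin_pos_of_pos_of_lt_pi ht1 (by linarith)
      · rw [show (n:ℝ)*θ + (p:ℝ)*θ = (t + δ - 2*Real.pi) + ((K+Kp+1 : ℤ):ℝ)*(2*Real.pi) by
          rw [ht, hδ]; push_cast; ring, Real.sin_add_int_mul_two_pi]
        exact sin_neg_of _ (by linarith) (by linarith)
  obtain ⟨n, hNn, hkey⟩ := key
  obtain ⟨n', rfl⟩ : ∃ m, n = m + 1 := ⟨n - 1, by omega⟩
  have hper' := hper n' (by omega)
  have h1 := hbx n'
  have h2 := hbx (n' + p)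
  have hc1 : ((n'+1 : ℕ):ℝ) * θ = ((n':ℝ) + 1) * θ := by push_cast; ring
  have hc2 : ((n'+1 : ℕ):ℝ) * θ + (p:ℝ) * θ = ((↑(n'+p) : ℝ) + 1) * θ := by push_cast; ring
  have hrp1 : (0:ℝ) < r^(n'+1) := pow_pos hr _
  have hrp2 : (0:ℝ) < r^(n'+p+1) := pow_pos hr _
  rcases hkey with ⟨hneg, hpos⟩ | ⟨hpos, hneg⟩
  · rw [hc1] at hneg
    rw [hc2] at hpos
    have hx1 : (trib (n'+1) : ℝ) - ψ * (trib n' : ℝ) < 0 := by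
      by_contra hcon
      push_neg at hcon
      have hge : 0 ≤ b * ((trib (n'+1) : ℝ) - ψ * (trib n' : ℝ)) := mul_nonneg hb.le hcon
      rw [h1] at hge
      nlinarith [mul_neg_of_pos_of_neg hrp1 hneg]
    have hx2 : 0 < (trib (n'+p+1) : ℝ) - ψ * (trib (n'+p) : ℝ) := by
      by_contra hcon
      push_neg at hcon
      have hge : b * ((trib (n'+p+1) : ℝ) - ψ * (trib (n'+p) : ℝ)) ≤ 0 := by
        exact mul_nonpos_of_nonneg_of_nonpos hb.le hcon
      rw [h2] at hge
      nlinarith [mul_pos hrp2 hpos]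
    rw [Real.sign_of_pos hx2, Real.sign_of_neg hx1] at hper'
    norm_num at hper'
  · rw [hc1] at hpos
    rw [hc2] at hneg
    have hx1 : 0 < (trib (n'+1) : ℝ) - ψ * (trib n' : ℝ) := by
      by_contra hcon
      push_neg at hcon
      have hge : b * ((trib (n'+1) : ℝ) - ψ * (trib n' : ℝ)) ≤ 0 := by
        exact mul_nonpos_of_nonneg_of_nonpos hb.le hcon
      rw [h1] at hge
      nlinarith [mul_pos hrp1 hpos]
    have hx2 : (trib (n'+p+1) : ℝ) - ψ * (trib (n'+p) : ℝ) < 0 := by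
      by_contra hcon
      push_neg at hcon
      have hge : 0 ≤ b * ((trib (n'+p+1) : ℝ) - ψ * (trib (n'+p) : ℝ)) := mul_nonneg hb.le hcon
      rw [h2] at hge
      nlinarith [mul_neg_of_pos_of_neg hrp2 hneg]
    rw [Real.sign_of_neg hx2, Real.sign_of_pos hx1] at hper'
    norm_num at hper'
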